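/- Let H' ⊆ H be finite-index subgroups of ℤ². Multiplication by the integer [H : H'] maps H into H', giving a homomorphism m_{H,H'} : H → H'. The map p* ⊕ p* sends ker(∂_1^H) into ker(∂_1^{H'}) and Im(∂_2^H) into Im(∂_2^{H'}), hence induces a homomorphism (p* ⊕ p*)~ : ker(∂_1^H)/Im(∂_2^H) → ker(∂_1^{H'})/Im(∂_2^{H'}). Moreover there exist group isomorphisms ψ : H → ker(∂_1^H)/Im(∂_2^H) and ψ' : H' → ker(∂_1^{H'})/Im(∂_2^{H'}) such that (p* ⊕ p*)~ ∘ ψ = ψ' ∘ m_{H,H'}. -/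

import Mathlib

set_option linter.unusedSectionVars false
set_option maxHeartbeats 1600000

namespace CovNatAux

variable {G : Type*} [AddCommGroup G] [Fintype G] [DecidableEq G]

def tau (z : G) : (G → ℤ) →+ (G → ℤ) where
  toFun f := fun u => f (u - z)
  map_zero' := rfl
  map_add' _ _ := rfl

lemma tau_apply (z : G) (f : G → ℤ) (u : G) : tau z f u = f (u - z) := rfl

lemma tau_single (z g : G) : tau z (Pi.single g (1:ℤ)) = Pi.single (g + z) (1:ℤ) := by
  funext u
  rw [tau_apply, Pi.single_apply, Pi.single_apply]
  exact if_congr sub_eq_iff_eq_add rfl rfl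

def eps : (G → ℤ) →+ ℤ where
  toFun f := ∑ u, f u
  map_zero' := by simp
  map_add' f g := by simp [Finset.sum_add_distrib]

lemma eps_apply (f : G → ℤ) : eps f = ∑ u, f u := rfl

lemma sum_translate (f : G → ℤ) (z : G) : ∑ u, f (u - z) = ∑ u, f u :=
  Fintype.sum_bijective _ (Equiv.subRight z).bijective _ _ (fun _ => rfl)

lemma hom_ext_single {M : Type*} [AddCommGroup M] (F F' : (G → ℤ) →+ M)
    (h : ∀ g, F (Pi.single g 1) = F' (Pi.single g 1)) : F = F' := by
  ext f
  simpa using h f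

lemma hom_ext_single2 {M : Type*} [AddCommGroup M] (F F' : ((G → ℤ) × (G → ℤ)) →+ M)
    (h1 : ∀ g, F (Pi.single g 1, 0) = F' (Pi.single g 1, 0))
    (h2 : ∀ g, F (0, Pi.single g 1) = F' (0, Pi.single g 1)) : F = F' := by
  have e1 : F.comp (AddMonoidHom.inl _ _) = F'.comp (AddMonoidHom.inl _ _) :=
    hom_ext_single _ _ (by simpa using h1)
  have e2 : F.comp (AddMonoidHom.inr _ _) = F'.comp (AddMonoidHom.inr _ _) :=
    hom_ext_single _ _ (by simpa using h2)
  ext f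
  have hf : f = (f.1, 0) + (0, f.2) := by simp
  rw [hf, map_add, map_add,
    show F (f.1, 0) = F' (f.1, 0) from DFunLike.congr_fun e1 f.1,
    show F (0, f.2) = F' (0, f.2) from DFunLike.congr_fun e2 f.2]

def D1 (x y : G) : ((G → ℤ) × (G → ℤ)) →+ (G → ℤ) :=
  ((AddMonoidHom.id _ - tau x).comp (AddMonoidHom.fst _ _)) +
  ((AddMonoidHom.id _ - tau y).comp (AddMonoidHom.snd _ _))

lemma D1_apply (x y : G) (f : (G → ℤ) × (G → ℤ)) (u : G) :
    D1 x y f u = f.1 u - f.1 (u - x) + (f.2 u - f.2 (u - y)) := rfl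

def D2 (x y : G) : (G → ℤ) →+ ((G → ℤ) × (G → ℤ)) :=
  (tau y - AddMonoidHom.id _).prod (AddMonoidHom.id _ - tau x)

lemma D2_apply (x y : G) (c : G → ℤ) :
    D2 x y c = (fun u => c (u - y) - c u, fun u => c u - c (u - x)) := rfl

lemma D1_single_left (x y g : G) :
    D1 x y (Pi.single g 1, 0) = Pi.single g (1:ℤ) - Pi.single (g + x) 1 := by
  have : D1 x y (Pi.single g 1, 0)
      = Pi.single g (1:ℤ) - tau x (Pi.single g 1) := by
    funext u; rw [D1_apply]; simp [tau_apply]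
  rw [this, tau_single]

lemma D1_single_right (x y g : G) :
    D1 x y (0, Pi.single g 1) = Pi.single g (1:ℤ) - Pi.single (g + y) 1 := by
  have : D1 x y (0, Pi.single g 1)
      = Pi.single g (1:ℤ) - tau y (Pi.single g 1) := by
    funext u; rw [D1_apply]; simp [tau_apply]
  rw [this, tau_single]

lemma D2_single (x y g : G) :
    D2 x y (Pi.single g 1) =
      (Pi.single (g + y) (1:ℤ) - Pi.single g 1, Pi.single g (1:ℤ) - Pi.single (g + x) 1) := by
  have : D2 x y (Pi.single g 1)
      = (tau y (Pi.single g (1:ℤ)) - Pi.single g 1, Pi.single g (1:ℤ) - tau x (Pi.single g 1)) := rfl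
  rw [this, tau_single, tau_single]

lemma step_invariant (z : G) (f : G → ℤ) (hz : ∀ u, f (u - z) = f u) :
    ∀ (p : ℤ) (w : G), f (w + p • z) = f w := by
  intro p w
  induction p using Int.induction_on with
  | zero => simp
  | succ i ih =>
    have h2 := hz (w + (i:ℤ) • z + z)
    rw [add_sub_cancel_right] at h2
    have h3 : w + ((i:ℤ)+1) • z = w + (i:ℤ) • z + z := by
      rw [add_smul, one_smul, add_assoc]
    rw [h3, ← h2, ih]
  | pred i ih =>
    have h3 : w + (-(i:ℤ)-1) • z = (w + (-(i:ℤ)) • z) - z := by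
      rw [sub_smul, one_smul]; abel
    rw [h3, hz, ih]

lemma eq_zero_of_invariant (x y : G) (hgen : ∀ g : G, ∃ p q : ℤ, p • x + q • y = g)
    (f : G → ℤ) (hx : ∀ u, f (u - x) = f u) (hy : ∀ u, f (u - y) = f u)
    (hsum : ∑ u, f u = 0) : ∀ u, f u = 0 := by
  have key : ∀ u : G, f u = f 0 := by
    intro u
    obtain ⟨p, q, h⟩ := hgen u
    have e : u = (0 + q • y) + p • x := by rw [← h]; abel
    rw [e, step_invariant x f hx, step_invariant y f hy]
  have hcard : (Fintype.card G : ℤ) * f 0 = 0 := by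
    have h1 : ∑ u : G, f u = ∑ _u : G, f 0 := Finset.sum_congr rfl (fun u _ => key u)
    rw [hsum, Finset.sum_const, Finset.card_univ, nsmul_eq_mul] at h1
    exact h1.symm
  have hf0 : f 0 = 0 := by
    have := Fintype.card_pos (α := G)
    rcases mul_eq_zero.mp hcard with h | h
    · exact absurd h (by positivity)
    · exact h
  intro u; rw [key u, hf0]

lemma sum_shift (g : ℕ → ℤ) (n : ℕ) :
    ∑ i ∈ Finset.range n, g (i+1) = ∑ i ∈ Finset.range n, g i - g 0 + g n := by
  have h1 := Finset.sum_range_succ' g n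
  have h2 := Finset.sum_range_succ g n
  linarith

lemma exact_mid (x y : G) (hgen : ∀ g : G, ∃ p q : ℤ, p • x + q • y = g)
    (a b : G → ℤ)
    (hker : ∀ u, a u - a (u - x) + (b u - b (u - y)) = 0)
    (ha : ∑ u, a u = 0) (hb : ∑ u, b u = 0) :
    ∃ c : G → ℤ, (∀ u, c (u - y) - c u = a u) ∧ (∀ u, c u - c (u - x) = b u) := by
  set k := addOrderOf x with hkdef
  set q := addOrderOf y with hqdef
  have hk0 : 0 < k := addOrderOf_pos x
  have hq0 : 0 < q := addOrderOf_pos y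
  have hkx : k • x = 0 := addOrderOf_nsmul_eq_zero x
  have hqy : q • y = 0 := addOrderOf_nsmul_eq_zero y
  have hsubkx : ∀ u : G, u - k • x = u := fun u => by rw [hkx, sub_zero]
  have hsubqy : ∀ u : G, u - q • y = u := fun u => by rw [hqy, sub_zero]
  have hsuccx : ∀ (u : G) (i : ℕ), u - x - i • x = u - (i+1) • x := by
    intro u i; rw [succ_nsmul]; abel
  have hsuccx' : ∀ (u : G) (i : ℕ), u - i • x - x = u - (i+1) • x := by
    intro u i; rw [succ_nsmul]; abel
  have hsuccy : ∀ (u : G) (i : ℕ), u - y - i • y = u - (i+1) • y := by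
    intro u i; rw [succ_nsmul]; abel
  set N := fun u => ∑ i ∈ Finset.range k, b (u - i • x) with hNdef
  have hNx : ∀ u, N (u - x) = N u := by
    intro u
    have h1 : N (u - x) = ∑ i ∈ Finset.range k, b (u - (i+1) • x) :=
      Finset.sum_congr rfl fun i _ => by rw [hsuccx]
    rw [h1, sum_shift (fun i => b (u - i • x)) k, hsubkx, zero_nsmul, sub_zero]
    ring
  have hbstep : ∀ w, b (w - y) = b w + (a w - a (w - x)) := by
    intro w; have := hker w; linarith
  have hNy : ∀ u, N (u - y) = N u := by
    intro u
    have h1 : N (u - y)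
        = ∑ i ∈ Finset.range k, (b (u - i • x) + (a (u - i • x) - a (u - i • x - x))) := by
      refine Finset.sum_congr rfl fun i _ => ?_
      rw [show u - y - i • x = u - i • x - y by abel, hbstep]
    rw [h1, Finset.sum_add_distrib]
    have h2 : ∑ i ∈ Finset.range k, (a (u - i • x) - a (u - i • x - x))
        = ∑ i ∈ Finset.range k, ((fun j => a (u - j • x)) i - (fun j => a (u - j • x)) (i+1)) := by
      refine Finset.sum_congr rfl fun i _ => ?_
      simp only []
      rw [hsuccx']
    rw [h2, Finset.sum_range_sub' (fun j => a (u - j • x)) k, hsubkx, zero_nsmul, sub_zero]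
    simp [hNdef]
  have hNsum : ∑ u, N u = 0 := by
    simp only [hNdef]
    rw [Finset.sum_comm]
    have : ∀ i ∈ Finset.range k, ∑ u, b (u - i • x) = 0 := fun i _ => by
      rw [sum_translate]; exact hb
    rw [Finset.sum_congr rfl this, Finset.sum_const, smul_zero]
  have hN0 : ∀ u, N u = 0 := eq_zero_of_invariant x y hgen N hNx hNy hNsum
  set c1 := fun u => ∑ i ∈ Finset.range k, (-(i:ℤ)) * b (u - i • x) with hc1def
  have hc1x : ∀ u, c1 u - c1 (u - x) = (k:ℤ) * b u := by
    intro u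
    set F := fun i : ℕ => (-(i:ℤ)) * b (u - i • x) with hFdef
    have h1 : c1 (u - x) = ∑ i ∈ Finset.range k, (-(i:ℤ)) * b (u - (i+1) • x) :=
      Finset.sum_congr rfl fun i _ => by rw [hsuccx]
    have h2 : c1 u - c1 (u - x)
        = ∑ i ∈ Finset.range k, ((F i - F (i+1)) - b (u - (i+1) • x)) := by
      rw [h1, hc1def, ← Finset.sum_sub_distrib]
      refine Finset.sum_congr rfl fun i _ => ?_
      simp only [hFdef]
      push_cast
      ring
    have h3 : ∑ i ∈ Finset.range k, b (u - (i+1) • x) = N (u - x) := by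
      refine (Finset.sum_congr rfl fun i _ => ?_).symm
      rw [hsuccx]
    rw [h2, Finset.sum_sub_distrib, Finset.sum_range_sub' F k, h3, hNx, hN0]
    simp only [hFdef, hsubkx, zero_nsmul, sub_zero, Nat.cast_zero, neg_zero, zero_mul]
    ring
  set a2 := fun u => (k:ℤ) * a u - (c1 (u - y) - c1 u) with ha2def
  have ha2x : ∀ u, a2 (u - x) = a2 u := by
    intro u
    have h1 := hc1x (u - y)
    have h2 := hc1x u
    have h3 := hker u
    have h3' : (k:ℤ) * a u - (k:ℤ) * a (u - x) + ((k:ℤ) * b u - (k:ℤ) * b (u - y)) = 0 := by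
      have := congrArg (fun t => (k:ℤ) * t) h3
      simpa [mul_add, mul_sub] using this
    simp only [ha2def]
    rw [show u - x - y = u - y - x by abel]
    linarith
  have ha2sum : ∑ u, a2 u = 0 := by
    simp only [ha2def]
    rw [Finset.sum_sub_distrib, Finset.sum_sub_distrib, sum_translate, ← Finset.mul_sum, ha]
    ring
  set M := fun u => ∑ j ∈ Finset.range q, a2 (u - j • y) with hMdef
  have hMy : ∀ u, M (u - y) = M u := by
    intro u
    have h1 : M (u - y) = ∑ j ∈ Finset.range q, a2 (u - (j+1) • y) :=
      Finset.sum_congr rfl fun j _ => by rw [hsuccy]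
    rw [h1, sum_shift (fun j => a2 (u - j • y)) q, hsubqy, zero_nsmul, sub_zero]
    ring
  have hMx : ∀ u, M (u - x) = M u := by
    intro u
    refine Finset.sum_congr rfl fun j _ => ?_
    rw [show u - x - j • y = u - j • y - x by abel, ha2x]
  have hMsum : ∑ u, M u = 0 := by
    simp only [hMdef]
    rw [Finset.sum_comm]
    have : ∀ j ∈ Finset.range q, ∑ u, a2 (u - j • y) = 0 := fun j _ => by
      rw [sum_translate]; exact ha2sum
    rw [Finset.sum_congr rfl this, Finset.sum_const, smul_zero]
  have hM0 : ∀ u, M u = 0 := eq_zero_of_invariant x y hgen M hMx hMy hMsum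
  set c2 := fun u => ∑ j ∈ Finset.range q, ((j:ℤ)) * a2 (u - j • y) with hc2def
  have hc2y : ∀ u, c2 (u - y) - c2 u = (q:ℤ) * a2 u := by
    intro u
    set F := fun j : ℕ => ((j:ℤ)) * a2 (u - j • y) with hFdef
    have h1 : c2 (u - y) = ∑ j ∈ Finset.range q, ((j:ℤ)) * a2 (u - (j+1) • y) :=
      Finset.sum_congr rfl fun j _ => by rw [hsuccy]
    have h2 : c2 (u - y) - c2 u
        = ∑ j ∈ Finset.range q, ((F (j+1) - F j) - a2 (u - (j+1) • y)) := by
      rw [h1, hc2def, ← Finset.sum_sub_distrib]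
      refine Finset.sum_congr rfl fun j _ => ?_
      simp only [hFdef]
      push_cast
      ring
    have h3 : ∑ j ∈ Finset.range q, a2 (u - (j+1) • y) = M (u - y) := by
      refine (Finset.sum_congr rfl fun j _ => ?_).symm
      rw [hsuccy]
    rw [h2, Finset.sum_sub_distrib, Finset.sum_range_sub F q, h3, hMy, hM0]
    simp only [hFdef, hsubqy, zero_nsmul, sub_zero, Nat.cast_zero, zero_mul]
  have hc2x : ∀ u, c2 u - c2 (u - x) = 0 := by
    intro u
    rw [sub_eq_zero, hc2def]
    refine Finset.sum_congr rfl fun j _ => ?_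
    rw [show u - x - j • y = u - j • y - x by abel, ha2x]
  set C := fun u => (q:ℤ) * c1 u + c2 u with hCdef
  set D := ((k:ℤ)) * ((q:ℤ)) with hDdef
  have hD0 : D ≠ 0 := by
    simp only [hDdef]
    positivity
  have hCy : ∀ u, C (u - y) - C u = D * a u := by
    intro u
    have h1 := hc2y u
    simp only [ha2def] at h1
    simp only [hCdef, hDdef]
    linear_combination h1
  have hCx : ∀ u, C u - C (u - x) = D * b u := by
    intro u
    have h1 := hc1x u
    have h2 := hc2x u
    simp only [hCdef, hDdef]
    linear_combination (q:ℤ) * h1 + h2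
  have stepdvd : ∀ (z : G), (∀ w, D ∣ C (w - z) - C w) →
      ∀ (p : ℤ) (w : G), D ∣ C (w + p • z) - C w := by
    intro z hz p w
    induction p using Int.induction_on with
    | zero => simp
    | succ i ih =>
      have h1 := hz (w + ((i:ℤ)+1) • z)
      have harg : w + ((i:ℤ)+1) • z - z = w + (i:ℤ) • z := by
        rw [add_smul, one_smul]; abel
      rw [harg] at h1
      have e : C (w + ((i:ℤ)+1) • z) - C w
          = -(C (w + (i:ℤ) • z) - C (w + ((i:ℤ)+1) • z)) + (C (w + (i:ℤ) • z) - C w) := by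
        ring
      rw [e]
      exact dvd_add (dvd_neg.mpr h1) ih
    | pred i ih =>
      have h1 := hz (w + (-(i:ℤ)) • z)
      have harg : w + (-(i:ℤ)) • z - z = w + (-(i:ℤ)-1) • z := by
        rw [sub_smul, one_smul]; abel
      rw [harg] at h1
      have e : C (w + (-(i:ℤ)-1) • z) - C w
          = (C (w + (-(i:ℤ)-1) • z) - C (w + (-(i:ℤ)) • z)) + (C (w + (-(i:ℤ)) • z) - C w) := by
        ring
      rw [e]
      exact dvd_add h1 ih
  have hdvd : ∀ u, D ∣ C u - C 0 := by
    intro u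
    obtain ⟨p, s, h⟩ := hgen u
    have e : u = (0 + s • y) + p • x := by rw [← h]; abel
    have d1 : D ∣ C ((0 + s • y) + p • x) - C (0 + s • y) := by
      refine stepdvd x ?_ p (0 + s • y)
      intro w
      refine ⟨-b w, ?_⟩
      have := hCx w
      linarith
    have d2 : D ∣ C (0 + s • y) - C 0 := by
      refine stepdvd y ?_ s 0
      intro w
      exact ⟨a w, by have := hCy w; linarith⟩
    have e2 : C u - C 0 = (C ((0 + s • y) + p • x) - C (0 + s • y)) + (C (0 + s • y) - C 0) := by
      rw [← e]; ring
    rw [e2]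
    exact dvd_add d1 d2
  refine ⟨fun u => (C u - C 0) / D, ?_, ?_⟩
  · intro u
    have e1 : D * ((C (u - y) - C 0) / D) = C (u - y) - C 0 := Int.mul_ediv_cancel' (hdvd _)
    have e2 : D * ((C u - C 0) / D) = C u - C 0 := Int.mul_ediv_cancel' (hdvd _)
    have e3 := hCy u
    refine mul_left_cancel₀ hD0 ?_
    rw [mul_sub, e1, e2]
    linarith
  · intro u
    have e1 : D * ((C (u - x) - C 0) / D) = C (u - x) - C 0 := Int.mul_ediv_cancel' (hdvd _)
    have e2 : D * ((C u - C 0) / D) = C u - C 0 := Int.mul_ediv_cancel' (hdvd _)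
    have e3 := hCx u
    refine mul_left_cancel₀ hD0 ?_
    rw [mul_sub, e1, e2]
    linarith

lemma single_shift (w z u : G) :
    (Pi.single w (1:ℤ) : G → ℤ) (u - z) = (Pi.single (w + z) (1:ℤ) : G → ℤ) u := by
  rw [Pi.single_apply, Pi.single_apply]
  exact if_congr sub_eq_iff_eq_add rfl rfl

lemma sum_single (w : G) : ∑ u, Pi.single w (1:ℤ) u = 1 := by
  simp [Pi.single_apply]

lemma exists_line (z v : G) (m : ℤ) :
    ∃ a : G → ℤ,
      (∀ u, a u - a (u - z)
        = (Pi.single v (1:ℤ) : G → ℤ) u - (Pi.single (v + m • z) (1:ℤ) : G → ℤ) u)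
      ∧ ∑ u, a u = m := by
  induction m using Int.induction_on with
  | zero =>
    refine ⟨0, fun u => ?_, by simp⟩
    rw [zero_smul, add_zero]
    simp
  | succ i ih =>
    obtain ⟨a, h1, h2⟩ := ih
    refine ⟨a + Pi.single (v + (i:ℤ) • z) 1, fun u => ?_, ?_⟩
    · have harg : v + ((i:ℤ)+1) • z = v + (i:ℤ) • z + z := by
        rw [add_smul, one_smul, add_assoc]
      have hs : (Pi.single (v + (i:ℤ) • z) (1:ℤ) : G → ℤ) (u - z)
          = (Pi.single (v + ((i:ℤ)+1) • z) (1:ℤ) : G → ℤ) u := by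
        rw [single_shift, harg]
      have h1u := h1 u
      simp only [Pi.add_apply]
      rw [hs] at *
      linarith [h1u]
    · simp only [Pi.add_apply]
      rw [Finset.sum_add_distrib, h2, sum_single]
  | pred i ih =>
    obtain ⟨a, h1, h2⟩ := ih
    refine ⟨a - Pi.single (v + (-(i:ℤ)-1) • z) 1, fun u => ?_, ?_⟩
    · have harg : v + (-(i:ℤ)) • z = (v + (-(i:ℤ)-1) • z) + z := by
        rw [sub_smul, one_smul]; abel
      have hs : (Pi.single (v + (-(i:ℤ)-1) • z) (1:ℤ) : G → ℤ) (u - z)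
          = (Pi.single (v + (-(i:ℤ)) • z) (1:ℤ) : G → ℤ) u := by
        rw [single_shift, ← harg]
      have h1u := h1 u
      simp only [Pi.sub_apply]
      rw [hs]
      linarith [h1u]
    · simp only [Pi.sub_apply]
      rw [Finset.sum_sub_distrib, h2, sum_single]

lemma weighted_sum (x y : G) (a b : G → ℤ)
    (hker : ∀ u, a u - a (u - x) + (b u - b (u - y)) = 0) :
    (∑ u, a u) • x + (∑ u, b u) • y = 0 := by
  have h0 : ∑ u, (a u - a (u - x) + (b u - b (u - y))) • u = (0 : G) := by
    rw [Finset.sum_congr rfl (fun u _ => by rw [hker u, zero_smul])]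
    exact Finset.sum_const_zero
  have e1 : ∑ u, a (u - x) • u = ∑ u, a u • (u + x) :=
    (Fintype.sum_bijective (fun u : G => u + x) (Equiv.addRight x).bijective _ _
      (fun v => by simp)).symm
  have e2 : ∑ u, b (u - y) • u = ∑ u, b u • (u + y) :=
    (Fintype.sum_bijective (fun u : G => u + y) (Equiv.addRight y).bijective _ _
      (fun v => by simp)).symm
  have expand : ∑ u, (a u - a (u - x) + (b u - b (u - y))) • u
      = -((∑ u, a u) • x) - ((∑ u, b u) • y) := by
    simp only [add_smul, sub_smul]
    rw [Finset.sum_add_distrib, Finset.sum_sub_distrib, Finset.sum_sub_distrib, e1, e2]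
    have e3 : ∑ u, a u • (u + x) = ∑ u, a u • u + (∑ u, a u) • x := by
      rw [Finset.sum_smul, ← Finset.sum_add_distrib]
      exact Finset.sum_congr rfl fun u _ => by rw [smul_add]
    have e4 : ∑ u, b u • (u + y) = ∑ u, b u • u + (∑ u, b u) • y := by
      rw [Finset.sum_smul, ← Finset.sum_add_distrib]
      exact Finset.sum_congr rfl fun u _ => by rw [smul_add]
    rw [e3, e4]
    abel
  have h2 : -((∑ u, a u) • x) - ((∑ u, b u) • y) = 0 := by rw [← expand]; exact h0
  have h3 : (∑ u, a u) • x + (∑ u, b u) • y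
      = -(-((∑ u, a u) • x) - ((∑ u, b u) • y)) := by abel
  rw [h3, h2, neg_zero]

section Quot

variable (K : AddSubgroup (ℤ × ℤ))

lemma mk_pair (m n : ℤ) :
    (QuotientAddGroup.mk (m, n) : (ℤ × ℤ) ⧸ K)
      = m • (QuotientAddGroup.mk ((1,0) : ℤ × ℤ) : (ℤ × ℤ) ⧸ K)
        + n • (QuotientAddGroup.mk ((0,1) : ℤ × ℤ) : (ℤ × ℤ) ⧸ K) := by
  have h : ((m : ℤ) • ((1,0) : ℤ × ℤ) + (n : ℤ) • ((0,1) : ℤ × ℤ)) = (m, n) := by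
    simp [Prod.ext_iff]
  rw [← h, QuotientAddGroup.mk_add, QuotientAddGroup.mk_zsmul, QuotientAddGroup.mk_zsmul]

lemma genK : ∀ g : (ℤ × ℤ) ⧸ K, ∃ p q : ℤ,
    p • (QuotientAddGroup.mk ((1,0) : ℤ × ℤ) : (ℤ × ℤ) ⧸ K)
      + q • (QuotientAddGroup.mk ((0,1) : ℤ × ℤ) : (ℤ × ℤ) ⧸ K) = g := by
  intro g
  induction g using QuotientAddGroup.induction_on with
  | H z => exact ⟨z.1, z.2, by rw [← mk_pair]⟩

variable [Fintype ((ℤ × ℤ) ⧸ K)] [DecidableEq ((ℤ × ℤ) ⧸ K)]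

/-- The key construction: the isomorphism `K ≃+ ker d1 / im d2` together with its
characterization in terms of coefficient sums. -/
lemma build_psi
    (d1 : ((((ℤ × ℤ) ⧸ K) → ℤ) × (((ℤ × ℤ) ⧸ K) → ℤ)) →+ (((ℤ × ℤ) ⧸ K) → ℤ))
    (d2 : (((ℤ × ℤ) ⧸ K) → ℤ) →+ ((((ℤ × ℤ) ⧸ K) → ℤ) × (((ℤ × ℤ) ⧸ K) → ℤ)))
    (hd1 : d1 = D1 (QuotientAddGroup.mk ((1,0) : ℤ × ℤ)) (QuotientAddGroup.mk ((0,1) : ℤ × ℤ)))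
    (hd2 : d2 = D2 (QuotientAddGroup.mk ((1,0) : ℤ × ℤ)) (QuotientAddGroup.mk ((0,1) : ℤ × ℤ))) :
    ∃ ψ : K ≃+ (d1.ker ⧸ d2.range.addSubgroupOf d1.ker),
      ∀ (h : K) (f : d1.ker), ψ h = QuotientAddGroup.mk f ↔
        (h : ℤ × ℤ) = (∑ u, f.val.1 u, ∑ u, f.val.2 u) := by
  set x : (ℤ × ℤ) ⧸ K := QuotientAddGroup.mk ((1,0) : ℤ × ℤ) with hx
  set y : (ℤ × ℤ) ⧸ K := QuotientAddGroup.mk ((0,1) : ℤ × ℤ) with hy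
  have hgen := genK K
  -- pointwise kernel condition
  have kerpt : ∀ f : d1.ker, ∀ u, f.val.1 u - f.val.1 (u - x)
      + (f.val.2 u - f.val.2 (u - y)) = 0 := by
    intro f u
    have hker0 : D1 x y f.val = 0 := by rw [← hd1]; exact f.2
    have := congrFun hker0 u
    rw [D1_apply] at this
    exact this
  -- the sum-of-coefficients map on the kernel lands in K
  have hmem : ∀ f : d1.ker, ((∑ u, f.val.1 u, ∑ u, f.val.2 u) : ℤ × ℤ) ∈ K := by
    intro f
    have hw := weighted_sum x y f.val.1 f.val.2 (kerpt f)
    rw [← QuotientAddGroup.eq_zero_iff, mk_pair, hw]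
  -- the sum map as a hom into K
  set Phi : d1.ker →+ K :=
    { toFun := fun f => ⟨(∑ u, f.val.1 u, ∑ u, f.val.2 u), hmem f⟩
      map_zero' := by
        refine Subtype.ext ?_
        simp [Prod.ext_iff]
      map_add' := fun f g => by
        refine Subtype.ext ?_
        have h1 : (f + g).val = f.val + g.val := rfl
        simp [h1, Prod.ext_iff, Finset.sum_add_distrib] } with hPhi
  have hPhival : ∀ f : d1.ker, (Phi f : ℤ × ℤ) = (∑ u, f.val.1 u, ∑ u, f.val.2 u) := fun f => rfl
  -- Phi vanishes on boundaries
  have hvanish : ∀ f ∈ d2.range.addSubgroupOf d1.ker, Phi f = 0 := by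
    intro f hf
    rw [AddSubgroup.mem_addSubgroupOf] at hf
    obtain ⟨c, hc⟩ := hf
    rw [hd2, D2_apply] at hc
    refine Subtype.ext ?_
    rw [hPhival]
    have h1 : f.val.1 = fun u => c (u - y) - c u := by rw [← hc]
    have h2 : f.val.2 = fun u => c u - c (u - x) := by rw [← hc]
    rw [h1, h2]
    have e1 : ∑ u, (c (u - y) - c u) = 0 := by
      rw [Finset.sum_sub_distrib, sum_translate, sub_self]
    have e2 : ∑ u, (c u - c (u - x)) = 0 := by
      rw [Finset.sum_sub_distrib, sum_translate, sub_self]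
    rw [e1, e2]
    rfl
  set psiInv : (d1.ker ⧸ d2.range.addSubgroupOf d1.ker) →+ K :=
    QuotientAddGroup.lift _ Phi hvanish with hpsiInv
  have hpsiInv_mk : ∀ f : d1.ker, psiInv (QuotientAddGroup.mk f) = Phi f := fun f => rfl
  -- injectivity
  have hinj : Function.Injective psiInv := by
    rw [injective_iff_map_eq_zero]
    intro qf h0
    induction qf using QuotientAddGroup.induction_on with
    | H f =>
      rw [hpsiInv_mk] at h0
      have h0' : ((∑ u, f.val.1 u, ∑ u, f.val.2 u) : ℤ × ℤ) = (0, 0) := by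
        rw [← hPhival]
        exact congrArg Subtype.val h0
      have hs1 : ∑ u, f.val.1 u = 0 := congrArg Prod.fst h0'
      have hs2 : ∑ u, f.val.2 u = 0 := congrArg Prod.snd h0'
      obtain ⟨c, hc1, hc2⟩ := exact_mid x y hgen f.val.1 f.val.2 (kerpt f) hs1 hs2
      rw [QuotientAddGroup.eq_zero_iff]
      rw [AddSubgroup.mem_addSubgroupOf]
      refine ⟨c, ?_⟩
      rw [hd2, D2_apply]
      refine Prod.ext ?_ ?_
      · funext u; exact hc1 u
      · funext u; exact hc2 u
  -- surjectivity
  have hsurj : Function.Surjective psiInv := by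
    rintro ⟨⟨m, n⟩, hmn⟩
    have hzero : m • x + n • y = 0 := by
      rw [← mk_pair, QuotientAddGroup.eq_zero_iff]
      exact hmn
    obtain ⟨a, ha1, ha2⟩ := exists_line x 0 m
    obtain ⟨b, hb1, hb2⟩ := exists_line y (m • x) n
    have hker' : D1 x y (a, b) = 0 := by
      funext u
      rw [D1_apply]
      have h1 := ha1 u
      have h2 := hb1 u
      rw [zero_add] at h1
      rw [hzero] at h2
      show a u - a (u - x) + (b u - b (u - y)) = (0 : ((ℤ × ℤ) ⧸ K) → ℤ) u
      rw [Pi.zero_apply, h1, h2]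
      ring
    refine ⟨QuotientAddGroup.mk ⟨(a, b), ?_⟩, ?_⟩
    · rw [AddMonoidHom.mem_ker, hd1]
      exact hker'
    · rw [hpsiInv_mk]
      refine Subtype.ext ?_
      rw [hPhival]
      exact Prod.ext ha2 hb2
  set e := AddEquiv.ofBijective psiInv ⟨hinj, hsurj⟩ with he
  have he_apply : ∀ t, e t = psiInv t := fun t => rfl
  refine ⟨e.symm, ?_⟩
  intro h f
  rw [AddEquiv.symm_apply_eq, he_apply, hpsiInv_mk]
  constructor
  · intro hh
    rw [hh, hPhival]
  · intro hh
    refine Subtype.ext ?_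
    rw [hPhival, hh]

end Quot

section Counting

lemma relindex_smul_mem (H H' : AddSubgroup (ℤ × ℤ)) (hle : H' ≤ H) :
    ∀ v ∈ H, (H'.relIndex H : ℤ) • v ∈ H' := by
  intro v hv
  have hq : (Nat.card (H ⧸ H'.addSubgroupOf H))
      • (QuotientAddGroup.mk (⟨v, hv⟩ : H) : H ⧸ H'.addSubgroupOf H) = 0 :=
    card_nsmul_eq_zero'
  rw [← QuotientAddGroup.mk_nsmul, QuotientAddGroup.eq_zero_iff,
    AddSubgroup.mem_addSubgroupOf] at hq
  have hval : ((Nat.card (H ⧸ H'.addSubgroupOf H) • (⟨v, hv⟩ : H) : H) : ℤ × ℤ)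
      = (Nat.card (H ⧸ H'.addSubgroupOf H)) • v := rfl
  rw [hval] at hq
  have hrel : H'.relIndex H = Nat.card (H ⧸ H'.addSubgroupOf H) :=
    AddSubgroup.index_eq_card _
  rw [hrel, natCast_zsmul]
  exact hq

variable (H H' : AddSubgroup (ℤ × ℤ))
variable [Fintype ((ℤ × ℤ) ⧸ H)] [DecidableEq ((ℤ × ℤ) ⧸ H)]
variable [Fintype ((ℤ × ℤ) ⧸ H')] [DecidableEq ((ℤ × ℤ) ⧸ H')]

lemma fiber_count (hle : H' ≤ H)
    (pmap : ((ℤ × ℤ) ⧸ H') →+ ((ℤ × ℤ) ⧸ H))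
    (hpmap : ∀ x : ℤ × ℤ, pmap (QuotientAddGroup.mk x) = QuotientAddGroup.mk x) :
    ∀ v : (ℤ × ℤ) ⧸ H,
      (Finset.univ.filter (fun u : (ℤ × ℤ) ⧸ H' => pmap u = v)).card = H'.relIndex H := by
  classical
  have hsurj : ∀ v : (ℤ × ℤ) ⧸ H, ∃ u : (ℤ × ℤ) ⧸ H', pmap u = v := by
    intro v
    induction v using QuotientAddGroup.induction_on with
    | H z => exact ⟨QuotientAddGroup.mk z, hpmap z⟩
  -- all fibers have the same cardinality
  have hconst : ∀ v : (ℤ × ℤ) ⧸ H,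
      (Finset.univ.filter (fun u : (ℤ × ℤ) ⧸ H' => pmap u = v)).card
        = (Finset.univ.filter (fun u : (ℤ × ℤ) ⧸ H' => pmap u = 0)).card := by
    intro v
    obtain ⟨u0, hu0⟩ := hsurj v
    refine (Finset.card_bij (fun a _ => a + u0) ?_ ?_ ?_).symm
    · intro a ha
      rw [Finset.mem_filter] at ha ⊢
      refine ⟨Finset.mem_univ _, ?_⟩
      rw [map_add, ha.2, hu0, zero_add]
    · intro a1 h1 a2 h2 he
      exact add_right_cancel he
    · intro b hb
      rw [Finset.mem_filter] at hb
      refine ⟨b - u0, ?_, ?_⟩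
      · rw [Finset.mem_filter]
        refine ⟨Finset.mem_univ _, ?_⟩
        rw [map_sub, hb.2, hu0, sub_self]
      · show b - u0 + u0 = b
        abel
  set c0 := (Finset.univ.filter (fun u : (ℤ × ℤ) ⧸ H' => pmap u = 0)).card with hc0
  have htotal : Fintype.card ((ℤ × ℤ) ⧸ H') = Fintype.card ((ℤ × ℤ) ⧸ H) * c0 := by
    have h1 := Finset.card_eq_sum_card_fiberwise
      (f := pmap) (s := (Finset.univ : Finset ((ℤ × ℤ) ⧸ H')))
      (t := (Finset.univ : Finset ((ℤ × ℤ) ⧸ H))) (fun z _ => Finset.mem_univ _)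
    rw [Finset.card_univ] at h1
    rw [h1, Finset.sum_congr rfl (fun v _ => hconst v), Finset.sum_const, Finset.card_univ,
      smul_eq_mul]
  have hidx : H'.relIndex H * Fintype.card ((ℤ × ℤ) ⧸ H) = Fintype.card ((ℤ × ℤ) ⧸ H') := by
    have := AddSubgroup.relIndex_mul_index hle
    rwa [AddSubgroup.index_eq_card, AddSubgroup.index_eq_card,
      Nat.card_eq_fintype_card, Nat.card_eq_fintype_card] at this
  have hpos : 0 < Fintype.card ((ℤ × ℤ) ⧸ H) := Fintype.card_pos
  have : H'.relIndex H = c0 := by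
    have h2 : H'.relIndex H * Fintype.card ((ℤ × ℤ) ⧸ H)
        = c0 * Fintype.card ((ℤ × ℤ) ⧸ H) := by
      rw [hidx, htotal]; ring
    exact Nat.eq_of_mul_eq_mul_right hpos h2
  intro v
  rw [hconst v, ← this]

end Counting

section Pstar

def compHom {A B : Type*} (p : A → B) : (B → ℤ) →+ (A → ℤ) where
  toFun f := fun a => f (p a)
  map_zero' := rfl
  map_add' _ _ := rfl

variable (H H' : AddSubgroup (ℤ × ℤ))
variable [Fintype ((ℤ × ℤ) ⧸ H)] [DecidableEq ((ℤ × ℤ) ⧸ H)]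
variable [Fintype ((ℤ × ℤ) ⧸ H')] [DecidableEq ((ℤ × ℤ) ⧸ H')]

lemma hom_ext_single' {G : Type*} [Fintype G] [DecidableEq G] {M : Type*} [AddCommGroup M]
    (F F' : (G → ℤ) →+ M)
    (h : ∀ g, F (Pi.single g 1) = F' (Pi.single g 1)) : F = F' := by
  ext f
  simpa using h f

lemma pstar_formula
    (pmap : ((ℤ × ℤ) ⧸ H') →+ ((ℤ × ℤ) ⧸ H))
    (pstar : (((ℤ × ℤ) ⧸ H) → ℤ) →+ (((ℤ × ℤ) ⧸ H') → ℤ))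
    (hpstar : ∀ v : (ℤ × ℤ) ⧸ H,
      pstar (Pi.single v (1 : ℤ)) =
        ∑ u ∈ Finset.univ.filter (fun u : (ℤ × ℤ) ⧸ H' => pmap u = v), Pi.single u (1 : ℤ)) :
    pstar = compHom pmap := by
  refine hom_ext_single' _ _ fun v => ?_
  rw [hpstar v]
  funext w
  rw [Finset.sum_apply]
  simp only [Pi.single_apply]
  rw [Finset.sum_ite_eq]
  show (if w ∈ Finset.univ.filter (fun u => pmap u = v) then (1:ℤ) else 0)
      = compHom pmap (Pi.single v 1) w
  have : compHom pmap (Pi.single v 1) w = if pmap w = v then (1:ℤ) else 0 := by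
    show (Pi.single v (1:ℤ) : ((ℤ × ℤ) ⧸ H) → ℤ) (pmap w) = _
    rw [Pi.single_apply]
  rw [this]
  simp [Finset.mem_filter]

end Pstar

end CovNatAux

open CovNatAux in
/-- for nested finite-index subgroups `H' ⊆ H ≤ ℤ²`, multiplication by
`[H:H']` maps `H` into `H'`; `p^* ⊕ p^*` maps `ker ∂₁ᴴ` into `ker ∂₁ᴴ'` and `Im ∂₂ᴴ`
into `Im ∂₂ᴴ'`, hence induces a map `(p^*⊕p^*)~` on the quotients; and there are
isomorphisms `ψ : H ≃ ker ∂₁ᴴ/Im ∂₂ᴴ` and `ψ' : H' ≃ ker ∂₁ᴴ'/Im ∂₂ᴴ'` with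
`(p^*⊕p^*)~ ∘ ψ = ψ' ∘ m_{H,H'}`. -/
theorem covering_naturality_K1 (H H' : AddSubgroup (ℤ × ℤ)) (hle : H' ≤ H)
    [Fintype ((ℤ × ℤ) ⧸ H)] [DecidableEq ((ℤ × ℤ) ⧸ H)]
    [Fintype ((ℤ × ℤ) ⧸ H')] [DecidableEq ((ℤ × ℤ) ⧸ H')]
    (pmap : ((ℤ × ℤ) ⧸ H') →+ ((ℤ × ℤ) ⧸ H))
    (hpmap : ∀ x : ℤ × ℤ,
      pmap (QuotientAddGroup.mk x) = QuotientAddGroup.mk x)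
    (pstar : (((ℤ × ℤ) ⧸ H) → ℤ) →+ (((ℤ × ℤ) ⧸ H') → ℤ))
    (hpstar : ∀ v : (ℤ × ℤ) ⧸ H,
      pstar (Pi.single v (1 : ℤ)) =
        ∑ u ∈ Finset.univ.filter (fun u : (ℤ × ℤ) ⧸ H' => pmap u = v), Pi.single u (1 : ℤ))
    (d1H : ((((ℤ × ℤ) ⧸ H) → ℤ) × (((ℤ × ℤ) ⧸ H) → ℤ)) →+ (((ℤ × ℤ) ⧸ H) → ℤ))
    (hd1Ha : ∀ g : (ℤ × ℤ) ⧸ H,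
      d1H (Pi.single g (1 : ℤ), 0) =
        Pi.single g (1 : ℤ) - Pi.single (g + QuotientAddGroup.mk ((1, 0) : ℤ × ℤ)) (1 : ℤ))
    (hd1Hb : ∀ g : (ℤ × ℤ) ⧸ H,
      d1H (0, Pi.single g (1 : ℤ)) =
        Pi.single g (1 : ℤ) - Pi.single (g + QuotientAddGroup.mk ((0, 1) : ℤ × ℤ)) (1 : ℤ))
    (d2H : (((ℤ × ℤ) ⧸ H) → ℤ) →+ ((((ℤ × ℤ) ⧸ H) → ℤ) × (((ℤ × ℤ) ⧸ H) → ℤ)))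
    (hd2H : ∀ g : (ℤ × ℤ) ⧸ H,
      d2H (Pi.single g (1 : ℤ)) =
        (Pi.single (g + QuotientAddGroup.mk ((0, 1) : ℤ × ℤ)) (1 : ℤ) - Pi.single g (1 : ℤ),
         Pi.single g (1 : ℤ) - Pi.single (g + QuotientAddGroup.mk ((1, 0) : ℤ × ℤ)) (1 : ℤ)))
    (d1H' : ((((ℤ × ℤ) ⧸ H') → ℤ) × (((ℤ × ℤ) ⧸ H') → ℤ)) →+ (((ℤ × ℤ) ⧸ H') → ℤ))
    (hd1H'a : ∀ g : (ℤ × ℤ) ⧸ H',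
      d1H' (Pi.single g (1 : ℤ), 0) =
        Pi.single g (1 : ℤ) - Pi.single (g + QuotientAddGroup.mk ((1, 0) : ℤ × ℤ)) (1 : ℤ))
    (hd1H'b : ∀ g : (ℤ × ℤ) ⧸ H',
      d1H' (0, Pi.single g (1 : ℤ)) =
        Pi.single g (1 : ℤ) - Pi.single (g + QuotientAddGroup.mk ((0, 1) : ℤ × ℤ)) (1 : ℤ))
    (d2H' : (((ℤ × ℤ) ⧸ H') → ℤ) →+ ((((ℤ × ℤ) ⧸ H') → ℤ) × (((ℤ × ℤ) ⧸ H') → ℤ)))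
    (hd2H' : ∀ g : (ℤ × ℤ) ⧸ H',
      d2H' (Pi.single g (1 : ℤ)) =
        (Pi.single (g + QuotientAddGroup.mk ((0, 1) : ℤ × ℤ)) (1 : ℤ) - Pi.single g (1 : ℤ),
         Pi.single g (1 : ℤ) - Pi.single (g + QuotientAddGroup.mk ((1, 0) : ℤ × ℤ)) (1 : ℤ))) :
    (∀ x ∈ H, (H'.relIndex H : ℤ) • x ∈ H') ∧
    (∀ f : (((ℤ × ℤ) ⧸ H) → ℤ) × (((ℤ × ℤ) ⧸ H) → ℤ),
      f ∈ d1H.ker → (pstar f.1, pstar f.2) ∈ d1H'.ker) ∧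
    (∀ f ∈ d2H.range, (pstar f.1, pstar f.2) ∈ d2H'.range) ∧
    ∃ (ψ : H ≃+ (d1H.ker ⧸ d2H.range.addSubgroupOf d1H.ker))
      (ψ' : H' ≃+ (d1H'.ker ⧸ d2H'.range.addSubgroupOf d1H'.ker)),
      ∀ (h : H) (f : d1H.ker), ψ h = QuotientAddGroup.mk f →
        ∀ (h' : H') (g : d1H'.ker),
          (h' : ℤ × ℤ) = (H'.relIndex H : ℤ) • (h : ℤ × ℤ) →
          (g : (((ℤ × ℤ) ⧸ H') → ℤ) × (((ℤ × ℤ) ⧸ H') → ℤ)) =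
            (pstar (f : (((ℤ × ℤ) ⧸ H) → ℤ) × (((ℤ × ℤ) ⧸ H) → ℤ)).1,
             pstar (f : (((ℤ × ℤ) ⧸ H) → ℤ) × (((ℤ × ℤ) ⧸ H) → ℤ)).2) →
          ψ' h' = QuotientAddGroup.mk g := by
  classical
  -- the differentials are given by the translation formulas
  have hd1 : d1H = D1 (QuotientAddGroup.mk ((1,0) : ℤ × ℤ))
      (QuotientAddGroup.mk ((0,1) : ℤ × ℤ)) := by
    refine hom_ext_single2 _ _ (fun g => ?_) (fun g => ?_)
    · rw [hd1Ha g, D1_single_left]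
    · rw [hd1Hb g, D1_single_right]
  have hd2 : d2H = D2 (QuotientAddGroup.mk ((1,0) : ℤ × ℤ))
      (QuotientAddGroup.mk ((0,1) : ℤ × ℤ)) := by
    refine hom_ext_single _ _ (fun g => ?_)
    rw [hd2H g, D2_single]
  have hd1' : d1H' = D1 (QuotientAddGroup.mk ((1,0) : ℤ × ℤ))
      (QuotientAddGroup.mk ((0,1) : ℤ × ℤ)) := by
    refine hom_ext_single2 _ _ (fun g => ?_) (fun g => ?_)
    · rw [hd1H'a g, D1_single_left]
    · rw [hd1H'b g, D1_single_right]
  have hd2' : d2H' = D2 (QuotientAddGroup.mk ((1,0) : ℤ × ℤ))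
      (QuotientAddGroup.mk ((0,1) : ℤ × ℤ)) := by
    refine hom_ext_single _ _ (fun g => ?_)
    rw [hd2H' g, D2_single]
  -- pstar is composition with pmap
  have hpsf : pstar = compHom pmap := pstar_formula H H' pmap pstar hpstar
  have hps : ∀ (w : ((ℤ × ℤ) ⧸ H) → ℤ) (u : (ℤ × ℤ) ⧸ H'), pstar w u = w (pmap u) := by
    intro w u; rw [hpsf]; rfl
  have hpmx : pmap (QuotientAddGroup.mk ((1,0) : ℤ × ℤ))
      = QuotientAddGroup.mk ((1,0) : ℤ × ℤ) := hpmap _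
  have hpmy : pmap (QuotientAddGroup.mk ((0,1) : ℤ × ℤ))
      = QuotientAddGroup.mk ((0,1) : ℤ × ℤ) := hpmap _
  refine ⟨relindex_smul_mem H H' hle, ?_, ?_, ?_⟩
  · -- kernel is preserved
    intro f hf
    rw [AddMonoidHom.mem_ker] at hf ⊢
    rw [hd1']
    funext u
    rw [D1_apply]
    have h0 : D1 (QuotientAddGroup.mk ((1,0) : ℤ × ℤ))
        (QuotientAddGroup.mk ((0,1) : ℤ × ℤ)) f = 0 := by rw [← hd1]; exact hf
    have h0u := congrFun h0 (pmap u)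
    rw [D1_apply] at h0u
    show pstar f.1 u - pstar f.1 (u - QuotientAddGroup.mk ((1,0) : ℤ × ℤ))
        + (pstar f.2 u - pstar f.2 (u - QuotientAddGroup.mk ((0,1) : ℤ × ℤ)))
        = (0 : ((ℤ × ℤ) ⧸ H') → ℤ) u
    rw [Pi.zero_apply, hps, hps, hps, hps, map_sub, map_sub, hpmx, hpmy]
    exact h0u
  · -- range is preserved
    intro f hf
    obtain ⟨c, hc⟩ := hf
    have hcf : D2 (QuotientAddGroup.mk ((1,0) : ℤ × ℤ))
        (QuotientAddGroup.mk ((0,1) : ℤ × ℤ)) c = f := by rw [← hd2]; exact hc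
    rw [D2_apply] at hcf
    refine ⟨pstar c, ?_⟩
    rw [hd2', D2_apply]
    have h1 : f.1 = fun u => c (u - QuotientAddGroup.mk ((0,1) : ℤ × ℤ)) - c u := by
      rw [← hcf]
    have h2 : f.2 = fun u => c u - c (u - QuotientAddGroup.mk ((1,0) : ℤ × ℤ)) := by
      rw [← hcf]
    refine Prod.ext ?_ ?_
    · funext u
      show pstar c (u - QuotientAddGroup.mk ((0,1) : ℤ × ℤ)) - pstar c u = pstar f.1 u
      rw [hps, hps, hps, map_sub, hpmy, h1]
    · funext u
      show pstar c u - pstar c (u - QuotientAddGroup.mk ((1,0) : ℤ × ℤ)) = pstar f.2 u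
      rw [hps, hps, hps, map_sub, hpmx, h2]
  · -- the isomorphisms
    obtain ⟨ψ, hψ⟩ := build_psi H d1H d2H hd1 hd2
    obtain ⟨ψ', hψ'⟩ := build_psi H' d1H' d2H' hd1' hd2'
    refine ⟨ψ, ψ', ?_⟩
    intro h f hhf h' g hh' hg
    have hcount : ∀ w : ((ℤ × ℤ) ⧸ H) → ℤ,
        ∑ u, w (pmap u) = (H'.relIndex H : ℤ) * ∑ v, w v := by
      intro w
      rw [← Finset.sum_fiberwise_of_maps_to
        (g := pmap) (t := (Finset.univ : Finset ((ℤ × ℤ) ⧸ H)))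
        (fun u _ => Finset.mem_univ (pmap u)) (fun u => w (pmap u))]
      have hin : ∀ v : (ℤ × ℤ) ⧸ H,
          ∑ u ∈ Finset.univ.filter (fun u : (ℤ × ℤ) ⧸ H' => pmap u = v), w (pmap u)
            = (H'.relIndex H : ℤ) * w v := by
        intro v
        have e1 : ∀ u ∈ Finset.univ.filter (fun u : (ℤ × ℤ) ⧸ H' => pmap u = v),
            w (pmap u) = w v := by
          intro u hu
          rw [Finset.mem_filter] at hu
          rw [hu.2]
        rw [Finset.sum_congr rfl e1, Finset.sum_const,
          fiber_count H H' hle pmap hpmap v, nsmul_eq_mul]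
      rw [Finset.sum_congr rfl (fun v _ => hin v), ← Finset.mul_sum]
    have hval : (h : ℤ × ℤ) = (∑ u, (f : _).val.1 u, ∑ u, (f : _).val.2 u) := (hψ h f).mp hhf
    refine (hψ' h' g).mpr ?_
    rw [hh', hval]
    have hg1 : g.val.1 = pstar (f.val).1 := by rw [hg]
    have hg2 : g.val.2 = pstar (f.val).2 := by rw [hg]
    have e1 : ∑ u, g.val.1 u = (H'.relIndex H : ℤ) * ∑ v, f.val.1 v := by
      rw [hg1]
      rw [show ∑ u, pstar f.val.1 u = ∑ u, f.val.1 (pmap u) from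
        Finset.sum_congr rfl (fun u _ => hps _ u)]
      exact hcount _
    have e2 : ∑ u, g.val.2 u = (H'.relIndex H : ℤ) * ∑ v, f.val.2 v := by
      rw [hg2]
      rw [show ∑ u, pstar f.val.2 u = ∑ u, f.val.2 (pmap u) from
        Finset.sum_congr rfl (fun u _ => hps _ u)]
      exact hcount _
    rw [e1, e2]
    show (H'.relIndex H : ℤ) • ((∑ u, f.val.1 u, ∑ u, f.val.2 u) : ℤ × ℤ) = _
    rw [Prod.smul_mk, smul_eq_mul, smul_eq_mul]
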